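/- arXiv:2011.05491 — 7 statements merged into one kernel-verified Lean document; each statement's English description precedes it below -/
import Mathlib

section
/- Let q be a power of a prime p. For all integers a, b with 0 ≤ b ≤ a < q, one has (-1)^a * C(a, b) ≡ (-1)^b * C(q-1-b, q-1-a) (mod p). -/
/-!
Modulo `p`, `C(q - 1, k) ≡ (-1)^k` for `k < q`, by Pascal's rule and `p ∣ C(q, k)` for
`0 < k < q`. Substituting this into the trinomial revision
`C(q - 1, a) C(a, b) = C(q - 1, b) C(q - 1 - b, a - b)` gives the congruence.
-/

theorem Nat.Prime.cast_choose_pow_sub_one {R : Type*} [Ring R] {p : ℕ} (hp : p.Prime)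
    [CharP R p] (e : ℕ) {k : ℕ} (hk : k < p ^ e) :
    ((p ^ e - 1).choose k : R) = (-1) ^ k := by
  induction k with
  | zero => simp
  | succ k ih =>
    have pascal : (p ^ e).choose (k + 1) = (p ^ e - 1).choose k + (p ^ e - 1).choose (k + 1) := by
      conv_lhs => rw [← Nat.sub_add_cancel (Nat.one_le_pow e p hp.pos)]
      exact Nat.choose_succ_succ _ _
    have hdvd : ((p ^ e).choose (k + 1) : R) = 0 :=
      (CharP.cast_eq_zero_iff R p _).mpr (hp.dvd_choose_pow k.succ_ne_zero hk.ne)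
    rw [pascal, Nat.cast_add, ih (by omega)] at hdvd
    rw [pow_succ, mul_neg_one]
    exact eq_neg_of_add_eq_zero_right hdvd

theorem stmt_0 (p : ℕ) (hp : p.Prime) (q : ℕ) (e : ℕ) (hq : q = p ^ e)
    (a b : ℕ) (hba : b ≤ a) (haq : a < q) :
    ((-1 : ZMod p) ^ a * (a.choose b : ZMod p)) =
      ((-1 : ZMod p) ^ b * ((q - 1 - b).choose (q - 1 - a) : ZMod p)) := by
  subst hq
  have revision := congrArg (Nat.cast : ℕ → ZMod p) (Nat.choose_mul (n := p ^ e - 1) hba)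
  push_cast at revision
  rwa [hp.cast_choose_pow_sub_one e haq, hp.cast_choose_pow_sub_one e (hba.trans_lt haq),
    Nat.choose_symm_of_eq_add (by omega : p ^ e - 1 - b = (a - b) + (p ^ e - 1 - a))] at revision
end

section
/- Let p be a prime and n a positive integer. If C(n, j) ≡ 0 (mod p) for all j with 0 < j < n, then n is a power of p. -/
/-! By Lucas' theorem, `C(n, p^e) ≡ ⌊n / p^e⌋ (mod p)`. Taking `p^e` to be the largest power of
`p` not exceeding `n`, the quotient `⌊n / p^e⌋` lies in `[1, p)`, so `p ∤ C(n, p^e)`; hence the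
hypothesis forces `p^e = n`. -/

namespace Nat

theorem choose_prime_pow_modEq_div {p : ℕ} [Fact p.Prime] (n e : ℕ) :
    n.choose (p ^ e) ≡ n / p ^ e [MOD p] := by
  induction e generalizing n with
  | zero => simp [Nat.ModEq.refl]
  | succ e ih =>
    have hp : 0 < p := (Fact.out : p.Prime).pos
    have lucas := Choose.choose_modEq_choose_mod_mul_choose_div_nat (p := p) (n := n)
      (k := p ^ (e + 1))
    rw [pow_succ', Nat.mul_mod_right, Nat.mul_div_cancel_left _ hp, Nat.choose_zero_right,
      one_mul] at lucas
    rw [pow_succ', ← Nat.div_div_eq_div_mul]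
    exact lucas.trans (ih (n / p))

theorem not_prime_dvd_choose_pow_log {p n : ℕ} (hp : p.Prime) (hn : n ≠ 0) :
    ¬ p ∣ n.choose (p ^ Nat.log p n) := by
  have : Fact p.Prime := ⟨hp⟩
  have hpos : 0 < n / p ^ Nat.log p n :=
    Nat.div_pos (Nat.pow_log_le_self p hn) (pow_pos hp.pos _)
  have hlt : n / p ^ Nat.log p n < p := by
    rw [Nat.div_lt_iff_lt_mul (pow_pos hp.pos _), ← pow_succ']
    exact Nat.lt_pow_succ_log_self hp.one_lt n
  rw [Nat.dvd_iff_mod_eq_zero, choose_prime_pow_modEq_div n _, ← Nat.dvd_iff_mod_eq_zero]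
  exact Nat.not_dvd_of_pos_of_lt hpos hlt

end Nat

theorem stmt_3 (p : ℕ) (hp : p.Prime) (n : ℕ) (hn : 0 < n)
    (h : ∀ j : ℕ, 0 < j → j < n → p ∣ n.choose j) :
    ∃ e : ℕ, n = p ^ e := by
  refine ⟨Nat.log p n, ?_⟩
  have hle : p ^ Nat.log p n ≤ n := Nat.pow_log_le_self p hn.ne'
  by_contra hne
  exact Nat.not_prime_dvd_choose_pow_log hp hn.ne'
    (h _ (pow_pos hp.pos _) (lt_of_le_of_ne hle (Ne.symm hne)))
end

section
/- Let q be a power of a prime p, and let n > 2 and a be integers such that C(n, j-1) + a * C(n, j) ≡ 0 (mod p) for all j with 1 < j < n. Then either n is a power of p, or a ≡ 1 (mod p) and n+1 is a power of p, or a ≡ -1 (mod p) and n = 3. -/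
/-!
Write `N` for `n` read mod `p`. The hypothesis is a two-term recurrence between consecutive
binomial coefficients. If `N = 0`, running it downwards from `C(n, n-1) = n` kills every
`C(n, j)` with `0 < j < n`, which forces `n` to be a power of `p`. If `N ≠ 0`, comparing the
recurrence at `j = 2, 3` with `C(n, k+1) (k+1) = C(n, k) (n-k)` gives `2 + a (N-1) = 0` and
(when `n ≥ 4`) `3 + a (N-2) = 0`, so `a = 1` and `N = -1`; for `n = 3` the recurrence at `j = 2`
is `3 (1 + a) = 0`. With `a = 1` the recurrence is Pascal's rule saying `C(n+1, j) = 0` for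
`1 < j < n`, and `C(n+1, 1) = C(n+1, n) = n + 1 = 0`.
-/

theorem Nat.exists_eq_pow_of_cast_choose_eq_zero {p m : ℕ} [Fact p.Prime] (hm : 0 < m)
    (h : ∀ j, 0 < j → j < m → (m.choose j : ZMod p) = 0) : ∃ t, m = p ^ t :=
  ⟨_, Choose.eq_pow_multiplicity_of_choose_modEq_zero_nat hm fun j hj =>
    (ZMod.natCast_eq_natCast_iff _ _ _).mp <| by
      rw [Finset.mem_Icc] at hj
      simpa using h j hj.1 (by omega)⟩

theorem Nat.cast_choose_succ_right_eq {R : Type*} [CommRing R] (n k : ℕ) :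
    (n.choose (k + 1) : R) * (k + 1) = n.choose k * (n - k) := by
  rcases le_or_gt k n with hk | hk
  · have := congrArg (Nat.cast : ℕ → R) (Nat.choose_succ_right_eq n k)
    push_cast [Nat.cast_sub hk] at this
    exact this
  · simp [Nat.choose_eq_zero_of_lt hk, Nat.choose_eq_zero_of_lt (Nat.lt_succ_of_lt hk)]

variable {R : Type*} [CommRing R] {n : ℕ} {a : R}

theorem cast_choose_eq_zero_of_cast_eq_zero
    (hrec : ∀ j : ℕ, 1 < j → j < n → (n.choose (j - 1) : R) + a * n.choose j = 0)
    (hn : (n : R) = 0) {j : ℕ} (hj : 0 < j) (hjn : j < n) : (n.choose j : R) = 0 := by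
  refine Nat.decreasingInduction (motive := fun j _ => 0 < j → (n.choose j : R) = 0)
    (fun k hk ih hk0 => ?_) (fun _ => ?_) (by omega : j ≤ n - 1) hj
  · simpa [ih (by omega)] using hrec (k + 1) (by omega) (by omega)
  · rw [Nat.choose_symm (by omega), Nat.choose_one_right, hn]

theorem eq_neg_one_of_choose_three [IsDomain R]
    (hrec : ∀ j : ℕ, 1 < j → j < 3 → ((3 : ℕ).choose (j - 1) : R) + a * (3 : ℕ).choose j = 0)
    (h3 : (3 : R) ≠ 0) : a = -1 := by
  have h := hrec 2 (by norm_num) (by norm_num)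
  norm_num [Nat.choose] at h
  have : (3 : R) * (a + 1) = 0 := by linear_combination h
  linear_combination (mul_eq_zero.mp this).resolve_left h3

theorem eq_one_and_cast_eq_neg_one [IsDomain R] (hn4 : 4 ≤ n)
    (hrec : ∀ j : ℕ, 1 < j → j < n → (n.choose (j - 1) : R) + a * n.choose j = 0)
    (hn : (n : R) ≠ 0) : a = 1 ∧ (n : R) = -1 := by
  have h2 := hrec 2 (by omega) (by omega)
  have h3 := hrec 3 (by omega) (by omega)
  have r1 := Nat.cast_choose_succ_right_eq (R := R) n 1
  have r2 := Nat.cast_choose_succ_right_eq (R := R) n 2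
  norm_num at h2 h3 r1 r2
  have hc2 : (n.choose 2 : R) ≠ 0 := by
    rintro hc; rw [hc, mul_zero, add_zero] at h2; exact hn h2
  have e2 : (n : R) * (2 + a * (n - 1)) = 0 := by linear_combination 2 * h2 - a * r1
  have e3 : (n.choose 2 : R) * (3 + a * (n - 2)) = 0 := by linear_combination 3 * h3 - a * r2
  have e2' := (mul_eq_zero.mp e2).resolve_left hn
  have e3' := (mul_eq_zero.mp e3).resolve_left hc2
  have ha : a = 1 := by linear_combination e2' - e3'
  exact ⟨ha, by subst ha; linear_combination e2'⟩

theorem cast_choose_succ_eq_zero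
    (hrec : ∀ j : ℕ, 1 < j → j < n → (n.choose (j - 1) : R) + n.choose j = 0)
    (hn : (n : R) = -1) {j : ℕ} (hj : 0 < j) (hjn : j < n + 1) : ((n + 1).choose j : R) = 0 := by
  have hsucc : ((n + 1 : ℕ) : R) = 0 := by push_cast; rw [hn, neg_add_cancel]
  obtain ⟨i, rfl⟩ : ∃ i, j = i + 1 := ⟨j - 1, by omega⟩
  rcases Nat.eq_zero_or_pos i with rfl | hi
  · rwa [Nat.choose_one_right]
  rcases eq_or_lt_of_le (by omega : i + 1 ≤ n) with hin | hin
  · rwa [hin, Nat.choose_succ_self_right]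
  · simpa [Nat.choose_succ_succ'] using hrec (i + 1) (by omega) hin

theorem stmt_4_general (p : ℕ) (hp : p.Prime)
    (n : ℕ) (hn : 2 < n) (a : ℤ)
    (h : ∀ j : ℕ, 1 < j → j < n →
      ((n.choose (j - 1) : ZMod p) + (a : ZMod p) * (n.choose j : ZMod p)) = 0) :
    (∃ t : ℕ, n = p ^ t) ∨
      ((a : ZMod p) = 1 ∧ ∃ t : ℕ, n + 1 = p ^ t) ∨
      ((a : ZMod p) = -1 ∧ n = 3) := by
  have : Fact p.Prime := ⟨hp⟩
  by_cases hN : (n : ZMod p) = 0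
  · exact .inl <| Nat.exists_eq_pow_of_cast_choose_eq_zero (by omega) fun j hj hjn =>
      cast_choose_eq_zero_of_cast_eq_zero h hN hj hjn
  rcases (by omega : n = 3 ∨ 4 ≤ n) with rfl | hn4
  · exact .inr <| .inr ⟨eq_neg_one_of_choose_three h (by exact_mod_cast hN), rfl⟩
  obtain ⟨ha, hN'⟩ := eq_one_and_cast_eq_neg_one hn4 h hN
  rw [ha] at h
  simp only [one_mul] at h
  exact .inr <| .inl ⟨ha, Nat.exists_eq_pow_of_cast_choose_eq_zero (by omega) fun j hj hjn =>
    cast_choose_succ_eq_zero h hN' hj hjn⟩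

theorem stmt_4 (p : ℕ) (hp : p.Prime) (q : ℕ) (e : ℕ) (hq : q = p ^ e)
    (n : ℕ) (hn : 2 < n) (a : ℤ)
    (h : ∀ j : ℕ, 1 < j → j < n →
      ((n.choose (j - 1) : ZMod p) + (a : ZMod p) * (n.choose j : ZMod p)) = 0) :
    (∃ t : ℕ, n = p ^ t) ∨
      ((a : ZMod p) = 1 ∧ ∃ t : ℕ, n + 1 = p ^ t) ∨
      ((a : ZMod p) = -1 ∧ n = 3) :=
  stmt_4_general p hp n hn a h
end

section
/- Let p be a prime and n > 2 an integer not divisible by p, and suppose a is an integer with C(n, j-1) + a*C(n, j) ≡ 0 (mod p) for all 1 < j < n. Then in F_p[x] one has the polynomial identity (x + a)(x + 1)^n = x^{n+1} + (a+n)x^n + (an+1)x + a. -/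
/-!
The coefficient of `X ^ (k + 1)` in `(X + a) * (X + 1) ^ n` is `C(n, k) + a * C(n, k + 1)`, and
the coefficient of `1` is `a`. The hypothesis says exactly that the coefficients of `X ^ j` with
`1 < j < n` vanish; the four remaining ones are `a`, `1 + a * n`, `n + a` and `1`.
-/

open Polynomial

section

variable {R : Type*} [CommRing R]

theorem coeff_X_add_C_mul_X_add_one_pow_zero (a : R) (n : ℕ) :
    ((X + C a) * (X + 1) ^ n).coeff 0 = a := by
  simp [add_mul, mul_coeff_zero, coeff_X_add_one_pow]

theorem coeff_X_add_C_mul_X_add_one_pow_succ (a : R) (n k : ℕ) :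
    ((X + C a) * (X + 1) ^ n).coeff (k + 1) = n.choose k + a * n.choose (k + 1) := by
  rw [add_mul, coeff_add, coeff_X_mul, coeff_C_mul, coeff_X_add_one_pow, coeff_X_add_one_pow]

theorem X_add_C_mul_X_add_one_pow_eq_of_choose {n : ℕ} (hn : 2 ≤ n) (a : R)
    (h : ∀ k, 0 < k → k + 1 < n → (n.choose k : R) + a * n.choose (k + 1) = 0) :
    (X + C a) * (X + 1) ^ n = X ^ (n + 1) + C (a + n) * X ^ n + C (a * n + 1) * X + C a := by
  ext (_ | k)
  · rw [coeff_X_add_C_mul_X_add_one_pow_zero]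
    simp (disch := omega) only [coeff_add, coeff_C_mul, coeff_X_pow, coeff_X, coeff_C, if_neg]
    simp
  rw [coeff_X_add_C_mul_X_add_one_pow_succ]
  obtain rfl | ⟨hk, hkn⟩ | rfl | rfl | hnk :
      k = 0 ∨ (0 < k ∧ k + 1 < n) ∨ n = k + 1 ∨ k = n ∨ n < k := by omega
  all_goals simp (disch := omega) only [coeff_add, coeff_C_mul, coeff_X_pow, coeff_X, coeff_C,
    if_true, if_neg]
  · simp
    ring
  · simp [h k hk hkn]
  · simp [Nat.choose_succ_self_right]
    ring
  · simp
  · simp [Nat.choose_eq_zero_of_lt, hnk, hnk.trans k.lt_succ_self]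

end

theorem stmt_5_general (p : ℕ)
    (n : ℕ) (hn : 2 < n) (a : ℤ)
    (h : ∀ j : ℕ, 1 < j → j < n →
      ((n.choose (j - 1) : ZMod p) + (a : ZMod p) * (n.choose j : ZMod p)) = 0) :
    (X + C (a : ZMod p)) * (X + 1) ^ n =
      X ^ (n + 1) + C ((a : ZMod p) + (n : ZMod p)) * X ^ n
        + C ((a : ZMod p) * (n : ZMod p) + 1) * X + C (a : ZMod p) :=
  X_add_C_mul_X_add_one_pow_eq_of_choose hn.le _ fun k hk hkn => by
    simpa using h (k + 1) (by omega) hkn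

theorem stmt_5 (p : ℕ) (hp : p.Prime) [Fact p.Prime]
    (n : ℕ) (hn : 2 < n) (hpn : ¬ p ∣ n) (a : ℤ)
    (h : ∀ j : ℕ, 1 < j → j < n →
      ((n.choose (j - 1) : ZMod p) + (a : ZMod p) * (n.choose j : ZMod p)) = 0) :
    (X + C (a : ZMod p)) * (X + 1) ^ n =
      X ^ (n + 1) + C ((a : ZMod p) + (n : ZMod p)) * X ^ n
        + C ((a : ZMod p) * (n : ZMod p) + 1) * X + C (a : ZMod p) :=
  stmt_5_general p n hn a h
end

section
/- Let p be a prime, and suppose integers a, n with n > 2 satisfy (x + a)(x + 1)^n = x^{n+1} + (a+n)x^n + (an+1)x + a in F_p[x], with n not divisible by p. Then (a - (-1)^n)(n - 1 - (-1)^n) ≡ 0 (mod p) and a(n-1) + 2 ≡ 0 (mod p). -/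
/-!
Write `s = (-1)^n`. Evaluating the identity at `x = -1` kills the left side and gives
`s (a + n - 1) = a (n - 1) + 1`; since `s² = 1` this is exactly
`(a - s)(n - 1 - s) = 0`. Comparing coefficients of `x²` (absent on the right because `n > 2`)
gives `n + a·C(n,2) = 0`, i.e. `n (a (n - 1) + 2) = 0`, and `n` is invertible mod `p`.
-/

open Polynomial

lemma Nat.cast_two_mul_choose_two {R : Type*} [CommRing R] (n : ℕ) :
    2 * (n.choose 2 : R) = n * (n - 1) := by
  cases n with
  | zero => simp
  | succ m =>
    have hchoose : 2 * (m + 1).choose 2 = (m + 1) * m := by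
      rw [Nat.choose_two_right, Nat.mul_div_cancel' (Nat.even_mul_pred_self (m + 1)).two_dvd]
      rfl
    rw [Nat.cast_succ, add_sub_cancel_right]
    simpa only [Nat.cast_mul, Nat.cast_ofNat, Nat.cast_succ] using
      congrArg (Nat.cast : ℕ → R) hchoose

lemma coeff_two_X_add_C_mul_X_add_one_pow {R : Type*} [Semiring R] (a : R) (n : ℕ) :
    ((X + C a) * (X + 1) ^ n).coeff 2 = n + a * n.choose 2 := by
  rw [add_mul, coeff_add, coeff_X_mul, coeff_C_mul, coeff_X_add_one_pow, coeff_X_add_one_pow,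
    Nat.choose_one_right]

section
variable {R : Type*} [CommRing R] {a : R} {n : ℕ}

lemma neg_one_pow_mul_eq_of_X_add_C_mul_X_add_one_pow_eq (hn : n ≠ 0)
    (h : (X + C a) * (X + 1) ^ n = X ^ (n + 1) + C (a + n) * X ^ n + C (a * n + 1) * X + C a) :
    (-1) ^ n * (a + n - 1) = a * (n - 1) + 1 := by
  have heval := congrArg (eval (-1)) h
  simp only [eval_mul, eval_add, eval_pow, eval_X, eval_C, eval_one, neg_add_cancel,
    zero_pow hn, mul_zero, pow_succ] at heval
  linear_combination -heval

lemma natCast_mul_eq_zero_of_X_add_C_mul_X_add_one_pow_eq (hn : 2 < n)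
    (h : (X + C a) * (X + 1) ^ n = X ^ (n + 1) + C (a + n) * X ^ n + C (a * n + 1) * X + C a) :
    (n : R) * (a * (n - 1) + 2) = 0 := by
  have hcoeff := congrArg (coeff · 2) h
  simp only [coeff_two_X_add_C_mul_X_add_one_pow, coeff_add, coeff_X_pow, coeff_C_mul,
    coeff_X_of_ne_one (show 2 ≠ 1 by omega), coeff_C, if_neg (show 2 ≠ n + 1 by omega),
    if_neg (show 2 ≠ n by omega), OfNat.ofNat_ne_zero, if_false, mul_zero, add_zero] at hcoeff
  linear_combination 2 * hcoeff - a * Nat.cast_two_mul_choose_two (R := R) n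

end

theorem stmt_6 (p : ℕ) (hp : p.Prime) (n : ℕ) (hn : 2 < n) (hpn : ¬ p ∣ n) (a : ℤ)
    (h : (X + C (a : ZMod p)) * (X + 1) ^ n =
      X ^ (n + 1) + C ((a : ZMod p) + (n : ZMod p)) * X ^ n
        + C ((a : ZMod p) * (n : ZMod p) + 1) * X + C (a : ZMod p)) :
    ((a : ZMod p) - (-1 : ZMod p) ^ n) * ((n : ZMod p) - 1 - (-1 : ZMod p) ^ n) = 0 ∧
      (a : ZMod p) * ((n : ZMod p) - 1) + 2 = 0 := by
  have : Fact p.Prime := ⟨hp⟩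
  have hn0 : (n : ZMod p) ≠ 0 := by rwa [Ne, ZMod.natCast_eq_zero_iff]
  have heval := neg_one_pow_mul_eq_of_X_add_C_mul_X_add_one_pow_eq (by omega) h
  have hsq : ((-1 : ZMod p) ^ n) ^ 2 = 1 := by rw [← pow_mul, pow_mul']; simp
  refine ⟨by linear_combination hsq - heval, ?_⟩
  exact (mul_eq_zero.mp (natCast_mul_eq_zero_of_X_add_C_mul_X_add_one_pow_eq hn h)).resolve_left hn0
end

section
/- Let p be a prime and n a positive integer with n + 1 divisible by p and such that (x+1)^{n+1} = x^{n+1} + 1 in F_p[x]. Then n + 1 is a power of p. -/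
/-!
Write `m = p ^ v * r` with `p ∤ r`. In characteristic `p`, `(X + 1) ^ (p ^ v) = X ^ (p ^ v) + 1`,
so both sides of `(X + 1) ^ m = X ^ m + 1` are `expand (p ^ v)` of the two sides of
`(X + 1) ^ r = X ^ r + 1`. Since `expand` is injective, the latter holds too, and comparing
coefficients of `X` gives `r = 0` in characteristic `p` unless `r = 1`.
-/

open Polynomial

section

variable {R : Type*} [CommSemiring R] (p : ℕ) [CharP R p]

theorem eq_one_of_X_add_one_pow_eq_of_not_dvd {r : ℕ} (hr : ¬p ∣ r)
    (h : (X + 1 : R[X]) ^ r = X ^ r + 1) : r = 1 := by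
  by_contra hr1
  have hcoeff := congrArg (coeff · 1) h
  simp only [coeff_X_add_one_pow, Nat.choose_one_right, coeff_add, coeff_X_pow, coeff_one,
    if_neg (Ne.symm hr1), one_ne_zero, if_false, add_zero] at hcoeff
  exact hr ((CharP.cast_eq_zero_iff R p r).mp hcoeff)

variable [Fact p.Prime]

theorem X_add_one_pow_mul_eq_expand (v r : ℕ) :
    (X + 1 : R[X]) ^ (p ^ v * r) = expand R (p ^ v) ((X + 1) ^ r) := by
  rw [pow_mul, add_pow_char_pow, one_pow, map_pow, map_add, expand_X, map_one]

theorem exists_eq_pow_of_X_add_one_pow_eq {m : ℕ} (hm : m ≠ 0)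
    (h : (X + 1 : R[X]) ^ m = X ^ m + 1) : ∃ t : ℕ, m = p ^ t := by
  obtain ⟨v, r, hr, rfl⟩ := Nat.exists_eq_pow_mul_and_not_dvd hm p (Fact.out : p.Prime).ne_one
  have hexpand : expand R (p ^ v) ((X + 1) ^ r) = expand R (p ^ v) (X ^ r + 1) := by
    rw [← X_add_one_pow_mul_eq_expand, h, map_add, map_pow, expand_X, map_one, pow_mul]
  have hr1 := eq_one_of_X_add_one_pow_eq_of_not_dvd p hr
    (expand_injective (pow_pos (Fact.out : p.Prime).pos v) hexpand)
  exact ⟨v, by rw [hr1, mul_one]⟩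

end

theorem stmt_7_general (p : ℕ) (hp : p.Prime) (n : ℕ)
    (h : (X + 1 : (ZMod p)[X]) ^ (n + 1) = X ^ (n + 1) + 1) :
    ∃ t : ℕ, n + 1 = p ^ t :=
  haveI := Fact.mk hp
  exists_eq_pow_of_X_add_one_pow_eq p n.succ_ne_zero h

theorem stmt_7 (p : ℕ) (hp : p.Prime) (n : ℕ) (hn : 0 < n) (hpn : p ∣ n + 1)
    (h : (X + 1 : (ZMod p)[X]) ^ (n + 1) = X ^ (n + 1) + 1) :
    ∃ t : ℕ, n + 1 = p ^ t :=
  stmt_7_general p hp n h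
end

section
/- (Generalized Jacobi identity) Let L be a Lie algebra over a commutative ring, let a, b, c ∈ L, and let n be a non-negative integer. Then [a, [b, c^n]] = Σ_{i=0}^{n} (-1)^i C(n, i) [a, c^i, b, c^{n-i}], where products are left-normed: [b, c^n] denotes the iterated bracket [[...[b,c],c],...,c] with c appearing n times, and [a, c^i, b, c^{n-i}] denotes [[...[[[...[a,c],...,c], b], c],...,c] with c appearing i times before b and n-i times after b. -/
private lemma lie_sum_left {L : Type*} [LieRing L] (c : L) {ι : Type*} (s : Finset ι)
    (g : ι → L) : ⁅∑ i ∈ s, g i, c⁆ = ∑ i ∈ s, ⁅g i, c⁆ :=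
  map_sum (AddMonoidHom.mk' (fun z => ⁅z, c⁆) (fun x y => add_lie x y c)) g s

/-- Generalized Jacobi identity, with left-normed brackets.
`(fun z => ⁅z, c⁆)^[n] b` is `[b, cⁿ]`. -/
theorem stmt_8 (R : Type*) (L : Type*) [CommRing R] [LieRing L] [LieAlgebra R L]
    (a b c : L) (n : ℕ) :
    ⁅a, (fun z => ⁅z, c⁆)^[n] b⁆ =
      ∑ i ∈ Finset.range (n + 1),
        ((-1 : ℤ) ^ i * (n.choose i : ℤ)) •
          (fun z => ⁅z, c⁆)^[n - i] ⁅(fun z => ⁅z, c⁆)^[i] a, b⁆ := by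
  set f : L → L := fun z => ⁅z, c⁆ with hf
  induction n generalizing a with
  | zero => simp
  | succ n ih =>
    have key : ⁅a, f^[n+1] b⁆ = f ⁅a, f^[n] b⁆ - ⁅f a, f^[n] b⁆ := by
      rw [Function.iterate_succ_apply']
      show ⁅a, ⁅f^[n] b, c⁆⁆ = ⁅⁅a, f^[n] b⁆, c⁆ - ⁅⁅a, c⁆, f^[n] b⁆
      rw [lie_lie, ← lie_skew ⁅a, c⁆ (f^[n] b)]
      abel
    rw [key, ih a, ih (f a)]
    -- push f into the first sum
    have hfsum : f (∑ i ∈ Finset.range (n + 1),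
          ((-1 : ℤ) ^ i * (n.choose i : ℤ)) • f^[n - i] ⁅f^[i] a, b⁆)
        = ∑ i ∈ Finset.range (n + 1),
          ((-1 : ℤ) ^ i * (n.choose i : ℤ)) • f^[n - i + 1] ⁅f^[i] a, b⁆ := by
      show ⁅_, c⁆ = _
      rw [lie_sum_left]
      refine Finset.sum_congr rfl fun i _ => ?_
      rw [Function.iterate_succ_apply']
      show _ = ((-1 : ℤ) ^ i * (n.choose i : ℤ)) • ⁅f^[n-i] ⁅f^[i] a, b⁆, c⁆
      rw [smul_lie]
    rw [hfsum]
    -- rewrite f^[i] (f a) as f^[i+1] a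
    have hfa : ∀ i ∈ Finset.range (n+1),
        ((-1 : ℤ) ^ i * (n.choose i : ℤ)) • f^[n - i] ⁅f^[i] (f a), b⁆
        = ((-1 : ℤ) ^ i * (n.choose i : ℤ)) • f^[n - i] ⁅f^[i+1] a, b⁆ := by
      intro i _
      rw [← Function.iterate_succ_apply]
    rw [Finset.sum_congr rfl hfa]
    rw [eq_comm, Finset.sum_range_succ']
    rw [show ∑ i ∈ Finset.range (n + 1),
          ((-1 : ℤ) ^ i * (n.choose i : ℤ)) • f^[n - i + 1] ⁅f^[i] a, b⁆
        = (∑ i ∈ Finset.range n,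
          ((-1 : ℤ) ^ (i+1) * (n.choose (i+1) : ℤ)) • f^[n - (i+1) + 1] ⁅f^[i+1] a, b⁆)
          + ((-1 : ℤ) ^ 0 * (n.choose 0 : ℤ)) • f^[n - 0 + 1] ⁅f^[0] a, b⁆
        from Finset.sum_range_succ' _ n]
    -- extend range n sum to range (n+1): extra term has choose n (n+1) = 0
    have hext : ∑ i ∈ Finset.range n,
          ((-1 : ℤ) ^ (i+1) * (n.choose (i+1) : ℤ)) • f^[n - (i+1) + 1] ⁅f^[i+1] a, b⁆
        = ∑ i ∈ Finset.range (n+1),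
          ((-1 : ℤ) ^ (i+1) * (n.choose (i+1) : ℤ)) • f^[n - (i+1) + 1] ⁅f^[i+1] a, b⁆ := by
      rw [Finset.sum_range_succ, Nat.choose_succ_self]
      simp
    rw [hext]
    have h0 : ((-1 : ℤ) ^ 0 * ((n+1).choose 0 : ℤ)) • f^[n + 1 - 0] ⁅f^[0] a, b⁆
        = ((-1 : ℤ) ^ 0 * (n.choose 0 : ℤ)) • f^[n - 0 + 1] ⁅f^[0] a, b⁆ := by
      norm_num
    have hmain : ∑ k ∈ Finset.range (n+1),
          ((-1 : ℤ) ^ (k+1) * ((n+1).choose (k+1) : ℤ)) • f^[n + 1 - (k+1)] ⁅f^[k+1] a, b⁆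
        = (∑ i ∈ Finset.range (n+1),
            ((-1 : ℤ) ^ (i+1) * (n.choose (i+1) : ℤ)) • f^[n - (i+1) + 1] ⁅f^[i+1] a, b⁆)
          - ∑ i ∈ Finset.range (n+1),
            ((-1 : ℤ) ^ i * (n.choose i : ℤ)) • f^[n - i] ⁅f^[i+1] a, b⁆ := by
      rw [← Finset.sum_sub_distrib]
      refine Finset.sum_congr rfl fun i hi => ?_
      rw [Finset.mem_range] at hi
      by_cases hin : i = n
      · rw [hin]
        have e1 : n + 1 - (n+1) = 0 := by omega
        have e2 : n - n = 0 := by omega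
        rw [e1, e2, Nat.choose_succ_self, Nat.choose_self, Nat.choose_self]
        push_cast
        rw [pow_succ]
        simp
      have h1 : n - (i+1) + 1 = n - i := by omega
      have h2 : n + 1 - (i+1) = n - i := by omega
      rw [h1, h2, ← sub_smul]
      congr 1
      rw [Nat.choose_succ_succ n i]
      push_cast
      ring
    rw [hmain, h0]
    abel
end
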